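/- A choice rule satisfies capacity-filling and the weaker axiom of revealed preference (WrARP) if and only if for each capacity q there exists a linear order ≻^q on A such that for each S, C(S,q) consists of the min{|S|,q} highest-≻^q elements of S (the orders may differ across capacities). -/
import Mathlib


open Finset

variable {α : Type*} [Fintype α] [DecidableEq α]

/-- The set of rejected alternatives `R(S,q) = S \ C(S,q)`. -/
def Rej (C : Finset α → ℕ → Finset α) (S : Finset α) (q : ℕ) : Finset α := S \ C S q

/-- A capacity-constrained choice rule chooses a subset of `S` of cardinality at most `q`. -/
def ValidRule (C : Finset α → ℕ → Finset α) : Prop :=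
  ∀ S : Finset α, ∀ q : ℕ, S.Nonempty → 1 ≤ q → q ≤ Fintype.card α →
    C S q ⊆ S ∧ (C S q).card ≤ q

/-- Capacity-filling: `|C(S,q)| = min {|S|, q}`. -/
def CapacityFilling (C : Finset α → ℕ → Finset α) : Prop :=
  ∀ S : Finset α, ∀ q : ℕ, S.Nonempty → 1 ≤ q → q ≤ Fintype.card α →
    (C S q).card = min S.card q

/-- Monotonicity: `C(S,q) ⊆ C(S,q+1)`. -/
def ChoiceMonotone (C : Finset α → ℕ → Finset α) : Prop :=
  ∀ S : Finset α, ∀ q : ℕ, S.Nonempty → 1 ≤ q → q < Fintype.card α →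
    C S q ⊆ C S (q + 1)

/-- Gross substitutes: if `a ∈ C(S,q)` then `a ∈ C(S \ {b}, q)` for `b ≠ a`. -/
def GrossSubstitutes (C : Finset α → ℕ → Finset α) : Prop :=
  ∀ S : Finset α, ∀ q : ℕ, ∀ a b : α, S.Nonempty → 1 ≤ q → q ≤ Fintype.card α →
    a ∈ S → b ∈ S → a ≠ b → a ∈ C S q → a ∈ C (S.erase b) q

/-- Irrelevance of accepted alternatives. -/
def IrrelevanceOfAcceptedAlternatives (C : Finset α → ℕ → Finset α) : Prop :=
  ∀ S S' : Finset α, ∀ q : ℕ, S.Nonempty → S'.Nonempty → 1 ≤ q → q < Fintype.card α →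
    Rej C S q = Rej C S' q →
    C S (q + 1) ∩ Rej C S q = C S' (q + 1) ∩ Rej C S' q

/-- `a` is revealed preferred to `b` at capacity `q`. -/
def RevealedPref (C : Finset α → ℕ → Finset α) (q : ℕ) (a b : α) : Prop :=
  ∃ S : Finset α, S.Nonempty ∧ a ∉ C S (q - 1) ∧ b ∉ C S (q - 1) ∧
    a ∈ C S q ∧ b ∈ Rej C S q

/-- Capacity-wise weak axiom of revealed preference. -/
def CWARP (C : Finset α → ℕ → Finset α) : Prop :=
  ∀ q : ℕ, 1 < q → q ≤ Fintype.card α →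
    ∀ a b : α, RevealedPref C q a b → ¬ RevealedPref C q b a

/-- Lexicographic choice: iteratively pick, for `i = 1, …, q`, the `π i`-maximal
remaining alternative of `S`, stopping when none remain. -/
def lexChoice (π : ℕ → LinearOrder α) (S : Finset α) : ℕ → Finset α
  | 0 => ∅
  | q + 1 =>
      let T := lexChoice π S q
      if h : (S \ T).Nonempty then insert (@Finset.max' α (π q) (S \ T) h) T else T

/-- `C` is (capacity-constrained) lexicographic for the priority profile `π`. -/
def IsLexFor (C : Finset α → ℕ → Finset α) (π : ℕ → LinearOrder α) : Prop :=
  ∀ S : Finset α, ∀ q : ℕ, S.Nonempty → 1 ≤ q → q ≤ Fintype.card α →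
    C S q = lexChoice π S q

/-- `C` is (capacity-constrained) lexicographic. -/
def IsLex (C : Finset α → ℕ → Finset α) : Prop :=
  ∃ π : ℕ → LinearOrder α, IsLexFor C π

/-- Weaker axiom of revealed preference (capacity held fixed). -/
def WrARP (C : Finset α → ℕ → Finset α) : Prop :=
  ∀ S S' : Finset α, ∀ q : ℕ, S.Nonempty → S'.Nonempty →
    1 ≤ q → q ≤ Fintype.card α →
    ∀ a b : α, a ∈ S → a ∈ S' → b ∈ S → b ∈ S' →
      a ∈ C S q → b ∈ C S' q → b ∉ C S q → a ∈ C S' q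

/-! ### Auxiliary lemmas -/

lemma lexChoice_succ (π : ℕ → LinearOrder α) (S : Finset α) (q : ℕ) :
    lexChoice π S (q + 1) =
      if h : (S \ lexChoice π S q).Nonempty then
        insert (@Finset.max' α (π q) (S \ lexChoice π S q) h) (lexChoice π S q)
      else lexChoice π S q := rfl

lemma lexChoice_subset (π : ℕ → LinearOrder α) (S : Finset α) (q : ℕ) :
    lexChoice π S q ⊆ S := by
  induction q with
  | zero => simp [lexChoice]
  | succ q ih =>
    rw [lexChoice_succ]
    split_ifs with h
    · refine insert_subset ?_ ih
      have := @Finset.max'_mem α (π q) _ h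
      exact (mem_sdiff.mp this).1
    · exact ih

lemma lexChoice_card (π : ℕ → LinearOrder α) (S : Finset α) (q : ℕ) :
    (lexChoice π S q).card = min S.card q := by
  induction q with
  | zero => simp [lexChoice]
  | succ q ih =>
    rw [lexChoice_succ]
    split_ifs with h
    · have hm := @Finset.max'_mem α (π q) _ h
      rw [mem_sdiff] at hm
      rw [card_insert_of_notMem hm.2, ih]
      have hss : lexChoice π S q ⊂ S :=
        ⟨lexChoice_subset π S q, fun hST => (mem_sdiff.mp (h.choose_spec)).2 (hST (mem_sdiff.mp h.choose_spec).1)⟩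
      have := Finset.card_lt_card hss
      rw [ih] at this
      omega
    · have hTS : lexChoice π S q = S := by
        have h' : S \ lexChoice π S q = ∅ := not_nonempty_iff_eq_empty.mp h
        exact Finset.Subset.antisymm (lexChoice_subset π S q)
          (by intro x hx; by_contra hxn; exact absurd (mem_sdiff.mpr ⟨hx, hxn⟩) (by simp [h']))
      rw [hTS]
      rw [hTS] at ih
      omega

lemma lexChoice_upper (r : LinearOrder α) (S : Finset α) (q : ℕ) :
    ∀ x ∈ lexChoice (fun _ => r) S q, ∀ y ∈ S, y ∉ lexChoice (fun _ => r) S q → r.lt y x := by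
  letI : LinearOrder α := r
  induction q with
  | zero => simp [lexChoice]
  | succ q ih =>
    rw [lexChoice_succ]
    split_ifs with h
    · intro x hx y hyS hyn
      have hyT : y ∉ lexChoice (fun _ => r) S q := fun hc => hyn (mem_insert_of_mem hc)
      rcases mem_insert.mp hx with rfl | hxT
      · have hym : y ∈ S \ lexChoice (fun _ => r) S q := mem_sdiff.mpr ⟨hyS, hyT⟩
        have hle := Finset.le_max' _ y hym
        have hne : y ≠ Finset.max' _ h := fun hc => hyn (hc ▸ mem_insert_self _ _)
        exact lt_of_le_of_ne hle hne
      · exact ih x hxT y hyS hyT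
    · intro x hx y hyS hyn
      exact ih x hx y hyS hyn

lemma upper_unique (r : LinearOrder α) {S T₁ T₂ : Finset α}
    (h1 : T₁ ⊆ S) (h2 : T₂ ⊆ S) (hcard : T₁.card = T₂.card)
    (u1 : ∀ x ∈ T₁, ∀ y ∈ S, y ∉ T₁ → r.lt y x)
    (u2 : ∀ x ∈ T₂, ∀ y ∈ S, y ∉ T₂ → r.lt y x) : T₁ = T₂ := by
  letI : LinearOrder α := r
  by_contra hne
  have hx : ∃ x, x ∈ T₁ ∧ x ∉ T₂ := by
    by_contra hcon
    push_neg at hcon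
    exact hne (Finset.eq_of_subset_of_card_le (fun x hx => hcon x hx) hcard.ge)
  obtain ⟨x, hx1, hx2⟩ := hx
  have hy : ∃ y, y ∈ T₂ ∧ y ∉ T₁ := by
    by_contra hcon
    push_neg at hcon
    exact hne (Finset.eq_of_subset_of_card_le (fun y hy => hcon y hy) hcard.le).symm
  obtain ⟨y, hy2, hy1⟩ := hy
  exact absurd (u1 x hx1 y (h2 hy2) hy1) (not_lt.mpr (u2 y hy2 x (h1 hx1) hx2).le)

/-- Rejection persists when the menu grows. -/
lemma rejUp {C : Finset α → ℕ → Finset α} (hC : ValidRule C) (hCF : CapacityFilling C)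
    (hW : WrARP C) {q : ℕ} (hq1 : 1 ≤ q) (hq2 : q ≤ Fintype.card α)
    {T T' : Finset α} (hsub : T ⊆ T') {c : α} (hcT : c ∈ T) (hc : c ∉ C T q) :
    c ∉ C T' q := by
  intro hc'
  have hT : T.Nonempty := ⟨c, hcT⟩
  have hT' : T'.Nonempty := ⟨c, hsub hcT⟩
  have hcardT : (C T q).card = min T.card q := hCF T q hT hq1 hq2
  have hsubC : C T q ⊆ T := (hC T q hT hq1 hq2).1
  have hlt : (C T q).card < T.card :=
    Finset.card_lt_card ⟨hsubC, fun hTC => hc (hTC hcT)⟩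
  have hq' : (C T q).card = q := by omega
  by_cases hd : ∀ d ∈ C T q, d ∈ C T' q
  · have hle : (insert c (C T q)).card ≤ (C T' q).card :=
      Finset.card_le_card (by
        intro z hz
        rcases Finset.mem_insert.mp hz with rfl | hz
        · exact hc'
        · exact hd z hz)
    have h1 : (insert c (C T q)).card = q + 1 := by
      rw [Finset.card_insert_of_notMem hc, hq']
    have h2 : (C T' q).card ≤ q := (hC T' q hT' hq1 hq2).2
    omega
  · push_neg at hd
    obtain ⟨d, hdC, hdC'⟩ := hd
    exact hdC' (hW T T' q hT hT' hq1 hq2 d c (hsubC hdC) (hsub (hsubC hdC))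
      hcT (hsub hcT) hdC hc' hc)

/-- `a` is chosen whenever `b` is chosen in a menu containing both. -/
def Rstar (C : Finset α → ℕ → Finset α) (q : ℕ) (a b : α) : Prop :=
  ∀ S : Finset α, a ∈ S → b ∈ S → b ∈ C S q → a ∈ C S q

lemma Rstar_trans {C : Finset α → ℕ → Finset α} (hC : ValidRule C) (hCF : CapacityFilling C)
    (hW : WrARP C) {q : ℕ} (hq1 : 1 ≤ q) (hq2 : q ≤ Fintype.card α)
    {a b c : α} (hab : Rstar C q a b) (hbc : Rstar C q b c) : Rstar C q a c := by
  intro S haS hcS hcC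
  by_cases hbS : b ∈ S
  · exact hab S haS hbS (hbc S hbS hcS hcC)
  · have hSne : S.Nonempty := ⟨a, haS⟩
    have hS'ne : (insert b S).Nonempty := ⟨b, mem_insert_self b S⟩
    have hb' : b ∈ C (insert b S) q := by
      by_cases hcC' : c ∈ C (insert b S) q
      · exact hbc (insert b S) (mem_insert_self b S) (mem_insert_of_mem hcS) hcC'
      · by_contra hbC'
        have hsub' : C (insert b S) q ⊆ C S q \ {c} := by
          intro x hx
          have hxS' : x ∈ insert b S := (hC (insert b S) q hS'ne hq1 hq2).1 hx
          have hxb : x ≠ b := fun h => hbC' (h ▸ hx)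
          have hxS : x ∈ S := by
            rcases mem_insert.mp hxS' with h | h
            · exact absurd h hxb
            · exact h
          have hxC : x ∈ C S q := by
            by_contra hxn
            exact (rejUp hC hCF hW hq1 hq2 (subset_insert b S) hxS hxn) hx
          refine mem_sdiff.mpr ⟨hxC, ?_⟩
          simp only [mem_singleton]
          intro h
          exact hcC' (h ▸ hx)
        have hcards : (C (insert b S) q).card = min (insert b S).card q :=
          hCF (insert b S) q hS'ne hq1 hq2
        have hcardS : (C S q).card = min S.card q := hCF S q hSne hq1 hq2
        have hle : (C (insert b S) q).card ≤ (C S q \ {c}).card := card_le_card hsub'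
        have hcd : (C S q \ {c}).card = (C S q).card - 1 := by
          rw [Finset.card_sdiff_of_subset (by simpa using hcC)]
          simp
        have hcardS' : (insert b S).card = S.card + 1 := card_insert_of_notMem hbS
        have h1 : 1 ≤ S.card := Finset.card_pos.mpr hSne
        omega
    have haC' : a ∈ C (insert b S) q :=
      hab (insert b S) (mem_insert_of_mem haS) (mem_insert_self b S) hb'
    by_contra han
    exact (rejUp hC hCF hW hq1 hq2 (subset_insert b S) haS han) haC'

theorem capacitywise_responsive_iff_capacityFilling_wrarp [Nonempty α]
    (C : Finset α → ℕ → Finset α) (hC : ValidRule C) :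
    (CapacityFilling C ∧ WrARP C) ↔
      ∀ q : ℕ, 1 ≤ q → q ≤ Fintype.card α →
        ∃ r : LinearOrder α, ∀ S : Finset α, S.Nonempty →
          C S q = lexChoice (fun _ => r) S q := by
  classical
  constructor
  · rintro ⟨hCF, hW⟩ q hq1 hq2
    -- rank function from Rstar
    set f : α → ℕ := fun a => (univ.filter (fun x => Rstar C q a x)).card with hf
    set g : α → ℕ ×ₗ (Fin (Fintype.card α)) :=
      fun a => toLex (f a, Fintype.equivFin α a) with hg
    have ginj : Function.Injective g := by
      intro x y hxy
      apply (Fintype.equivFin α).injective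
      have h2 : (ofLex (g x)).2 = (ofLex (g y)).2 := by rw [hxy]
      simpa [hg] using h2
    refine ⟨LinearOrder.lift' g ginj, ?_⟩
    set r : LinearOrder α := LinearOrder.lift' g ginj with hr
    have key : ∀ x y : α, Rstar C q x y → ¬ Rstar C q y x → r.lt y x := by
      intro x y hxy hyx
      have hflt : f y < f x := by
        apply Finset.card_lt_card
        constructor
        · intro z hz
          simp only [mem_filter, mem_univ, true_and] at hz ⊢
          exact Rstar_trans hC hCF hW hq1 hq2 hxy hz
        · intro hsub
          have hx : x ∈ univ.filter (fun z => Rstar C q x z) := by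
            simp only [mem_filter, mem_univ, true_and]
            intro S hxS _ h
            exact h
          exact hyx (by simpa using hsub hx)
      show g y < g x
      exact Prod.Lex.left _ _ hflt
    intro S hS
    have hsubC : C S q ⊆ S := (hC S q hS hq1 hq2).1
    have hupper : ∀ x ∈ C S q, ∀ y ∈ S, y ∉ C S q → r.lt y x := by
      intro x hx y hyS hyn
      apply key
      · intro S' hxS' hyS' hyC'
        exact hW S S' q hS ⟨y, hyS'⟩ hq1 hq2 x y (hsubC hx) hxS' hyS hyS' hx hyC' hyn
      · intro hcon
        exact hyn (hcon S hyS (hsubC hx) hx)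
    refine upper_unique r hsubC (lexChoice_subset _ S q) ?_ hupper (lexChoice_upper r S q)
    rw [hCF S q hS hq1 hq2, lexChoice_card]
  · intro h
    constructor
    · intro S q hS hq1 hq2
      obtain ⟨r, hr⟩ := h q hq1 hq2
      rw [hr S hS, lexChoice_card]
    · intro S S' q hS hS' hq1 hq2 a b haS haS' hbS hbS' haC hbC hbn
      obtain ⟨r, hr⟩ := h q hq1 hq2
      letI : LinearOrder α := r
      rw [hr S hS] at haC hbn
      rw [hr S' hS'] at hbC ⊢
      by_contra han
      have h1 : r.lt b a := lexChoice_upper r S q a haC b hbS hbn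
      have h2 : r.lt a b := lexChoice_upper r S' q b hbC a haS' han
      exact absurd h1 (lt_asymm h2)
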